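/- The accepted sample may be paired with the rejected proposals of an independent run: if ((Y_i', U_i'))_{i≥1} is a second i.i.d. sequence with the same law, independent of ((Y_i, U_i))_{i≥1}, with first-acceptance time T', then for every r ≥ 0, every measurable B ⊆ 𝕏^r and every measurable A ⊆ 𝕏, P(T' = r+1, (Y_1',…,Y_r') ∈ B, Y_T ∈ A) = P(T = r+1, (Y_1,…,Y_r) ∈ B, Y_T ∈ A); that is, the joint law of (the rejected proposals of one run, the accepted sample of another independent run) coincides with the joint law of (the rejected proposals, the accepted sample) of a single run. (This justifies Algorithm 1 for sampling the rejected proposals given an observation.) -/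

import Mathlib

open MeasureTheory ProbabilityTheory

/-- Trial `i` of the rejection sampler is accepted: the uniform variable falls below
`f(Y_i)/(M q(Y_i))`, interpreted as rejection when `q(Y_i) = 0`. -/
def accepts {𝕏 Ω : Type*} (q f : 𝕏 → ℝ) (M : ℝ)
    (Y : ℕ → Ω → 𝕏) (U : ℕ → Ω → ℝ) (i : ℕ) (ω : Ω) : Prop :=
  q (Y i ω) ≠ 0 ∧ U i ω ≤ f (Y i ω) / (M * q (Y i ω))

open Classical in
/-- The first accepted sample `Y_T` of the rejection sampler (an arbitrary value,
namely `Y 0 ω`, on the null event where no trial is ever accepted). -/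
noncomputable def firstAccepted {𝕏 Ω : Type*} (q f : 𝕏 → ℝ) (M : ℝ)
    (Y : ℕ → Ω → 𝕏) (U : ℕ → Ω → ℝ) (ω : Ω) : 𝕏 :=
  if h : ∃ i, accepts q f M Y U i ω then Y (Nat.find h) ω else Y 0 ω

section RejectionHelpers

set_option linter.unusedSectionVars false

variable {Ω E : Type*} [MeasurableSpace Ω] [MeasurableSpace E]
  {P : Measure Ω} [IsProbabilityMeasure P] {φ : ℕ → Ω → E} {μ0 : Measure E}

lemma mapW_eq_pi (hφ : ∀ i, Measurable (φ i))
    (hind : iIndepFun φ P)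
    (hlaw : ∀ i, P.map (φ i) = μ0) (n : ℕ) :
    P.map (fun ω (j : Fin n) => φ j ω) = Measure.pi (fun _ : Fin n => μ0) := by
  haveI hpm : IsProbabilityMeasure (P.map (φ 0)) := Measure.isProbabilityMeasure_map (hφ 0).aemeasurable
  haveI : IsProbabilityMeasure μ0 := hlaw 0 ▸ hpm
  refine (Measure.pi_eq (μ := fun _ : Fin n => μ0) fun s hs => ?_).symm
  have hWm : Measurable fun ω (j : Fin n) => φ j ω := measurable_pi_lambda _ fun j => hφ j
  rw [Measure.map_apply hWm (MeasurableSet.univ_pi hs)]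
  classical
  set sets : ℕ → Set E := fun i => if h : i < n then s ⟨i, h⟩ else Set.univ with hsets_def
  have hsets : ∀ i ∈ Finset.range n, MeasurableSet (sets i) := by
    intro i _; by_cases h : i < n
    · simp only [hsets_def, dif_pos h]; exact hs _
    · simp only [hsets_def, dif_neg h]; exact MeasurableSet.univ
  have hset_eq : (fun ω (j : Fin n) => φ j ω) ⁻¹' Set.pi Set.univ s
      = ⋂ i ∈ Finset.range n, φ i ⁻¹' sets i := by
    ext ω
    simp only [Set.mem_preimage, Set.mem_pi, Set.mem_univ, forall_true_left, Set.mem_iInter,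
      Finset.mem_range]
    constructor
    · intro h i hi; simp only [hsets_def, dif_pos hi]; exact h ⟨i, hi⟩
    · intro h j; have := h j j.2; simpa only [hsets_def, dif_pos j.2] using this
  rw [hset_eq, hind.measure_inter_preimage_eq_mul _ hsets,
    ← Fin.prod_univ_eq_prod_range (fun i => P (φ i ⁻¹' sets i)) n]
  refine Finset.prod_congr rfl fun j _ => ?_
  have : sets (j : ℕ) = s j := by simp only [hsets_def, dif_pos j.2]
  rw [this, ← hlaw (j : ℕ), Measure.map_apply (hφ _) (hs j)]

lemma key_split (hφ : ∀ i, Measurable (φ i))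
    (hind : iIndepFun φ P)
    (hlaw : ∀ i, P.map (φ i) = μ0) (n : ℕ)
    {D : Set (Fin n → E)} (hD : MeasurableSet D) {T : Set E} (hT : MeasurableSet T) :
    P ({ω | (fun j : Fin n => φ j ω) ∈ D} ∩ {ω | φ n ω ∈ T})
      = P {ω | (fun j : Fin n => φ j ω) ∈ D} * μ0 T := by
  classical
  have hdisj : Disjoint (Finset.range n) ({n} : Finset ℕ) := by simp
  have hIF := hind.indepFun_finset (Finset.range n) {n} hdisj hφ
  let e : (↥(Finset.range n) → E) → (Fin n → E) :=
    fun v j => v ⟨(j : ℕ), Finset.mem_range.mpr j.2⟩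
  have he_meas : Measurable e := measurable_pi_lambda _ fun j => measurable_pi_apply _
  let Tset : Set (↥({n} : Finset ℕ) → E) :=
    (fun v : (↥({n} : Finset ℕ) → E) => v ⟨n, Finset.mem_singleton_self n⟩) ⁻¹' T
  have h1 : {ω | (fun j : Fin n => φ j ω) ∈ D}
      = (fun a (i : (Finset.range n : Finset ℕ)) => φ i a) ⁻¹' (e ⁻¹' D) := rfl
  have h2 : {ω | φ n ω ∈ T}
      = (fun a (i : ({n} : Finset ℕ)) => φ i a) ⁻¹' Tset := rfl
  rw [h1, h2, hIF.measure_inter_preimage_eq_mul _ _ (he_meas hD)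
    ((measurable_pi_apply _) hT)]
  congr 1
  rw [← hlaw n, Measure.map_apply (hφ n) hT]
  rfl

lemma cross_eq {φ' : ℕ → Ω → E}
    (hφ : ∀ i, Measurable (φ i)) (hφ' : ∀ i, Measurable (φ' i))
    (hind : iIndepFun φ P)
    (hind' : iIndepFun φ' P)
    (hlaw : ∀ i, P.map (φ i) = μ0) (hlaw' : ∀ i, P.map (φ' i) = μ0) (n : ℕ)
    {D : Set (Fin n → E)} (hD : MeasurableSet D) :
    P {ω | (fun j : Fin n => φ' j ω) ∈ D} = P {ω | (fun j : Fin n => φ j ω) ∈ D} := by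
  have hm : Measurable fun ω (j : Fin n) => φ j ω := measurable_pi_lambda _ fun j => hφ j
  have hm' : Measurable fun ω (j : Fin n) => φ' j ω := measurable_pi_lambda _ fun j => hφ' j
  have : P {ω | (fun j : Fin n => φ' j ω) ∈ D} = P.map (fun ω (j : Fin n) => φ' j ω) D :=
    (Measure.map_apply hm' hD).symm
  rw [this, mapW_eq_pi hφ' hind' hlaw' n, ← mapW_eq_pi hφ hind hlaw n,
    Measure.map_apply hm hD]
  rfl

end RejectionHelpers

/-- The acceptance region of the rejection sampler, as a subset of `𝕏 × ℝ`. -/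
def accSet {𝕏 : Type*} (q f : 𝕏 → ℝ) (M : ℝ) : Set (𝕏 × ℝ) :=
  {p | q p.1 ≠ 0 ∧ p.2 ≤ f p.1 / (M * q p.1)}

lemma measurableSet_accSet {𝕏 : Type*} [MeasurableSpace 𝕏] {q f : 𝕏 → ℝ}
    (hqm : Measurable q) (hfm : Measurable f) (M : ℝ) :
    MeasurableSet (accSet q f M) := by
  have h1 : MeasurableSet {p : 𝕏 × ℝ | q p.1 ≠ 0} :=
    ((hqm.comp measurable_fst) (measurableSet_singleton 0)).compl
  have h2 : MeasurableSet {p : 𝕏 × ℝ | p.2 ≤ f p.1 / (M * q p.1)} :=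
    measurableSet_le measurable_snd
      (((hfm.div ((measurable_const.mul hqm))).comp measurable_fst))
  exact h1.inter h2

lemma accept_prob_eq {𝕏 : Type*} [MeasurableSpace 𝕏] (lam : Measure 𝕏) [SigmaFinite lam]
    (q f : 𝕏 → ℝ) (hqm : Measurable q) (hfm : Measurable f)
    (hq0 : ∀ x, 0 ≤ q x) (M : ℝ) (hM : 0 < M)
    (hf0 : ∀ x, 0 ≤ f x) (hfq : ∀ x, f x ≤ M * q x)
    {Ω : Type*} [MeasurableSpace Ω] (P : Measure Ω) [IsProbabilityMeasure P]
    (Y0 : Ω → 𝕏) (U0 : Ω → ℝ) (hY0 : Measurable Y0) (hU0 : Measurable U0)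
    (hYlaw : P.map Y0 = lam.withDensity fun x => ENNReal.ofReal (q x))
    (hUlaw : P.map U0 = volume.restrict (Set.Icc (0:ℝ) 1))
    (hYU : IndepFun Y0 U0 P) :
    P.map (fun ω => (Y0 ω, U0 ω)) (accSet q f M)
      = ∫⁻ x, ENNReal.ofReal (f x / M) ∂lam := by
  have hprod : P.map (fun ω => (Y0 ω, U0 ω)) = (P.map Y0).prod (P.map U0) :=
    (indepFun_iff_map_prod_eq_prod_map_map hY0.aemeasurable hU0.aemeasurable).1 hYU
  rw [hprod, hYlaw, hUlaw,
    Measure.prod_apply (measurableSet_accSet hqm hfm M)]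
  have hinner : ∀ x : 𝕏, (volume.restrict (Set.Icc (0:ℝ) 1))
      (Prod.mk x ⁻¹' accSet q f M)
      = (if q x = 0 then 0 else ENNReal.ofReal (f x / (M * q x))) := by
    intro x
    by_cases hx : q x = 0
    · have : Prod.mk x ⁻¹' accSet q f M = ∅ := by
        ext u; simp [accSet, hx]
      simp [this, hx]
    · have hqx : 0 < q x := lt_of_le_of_ne (hq0 x) (Ne.symm hx)
      have hMq : 0 < M * q x := mul_pos hM hqx
      set t := f x / (M * q x) with ht
      have ht0 : 0 ≤ t := div_nonneg (hf0 x) hMq.le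
      have ht1 : t ≤ 1 := (div_le_one hMq).2 (hfq x)
      have hpre : Prod.mk x ⁻¹' accSet q f M = Set.Iic t := by
        ext u; simp [accSet, hx, ht]
      rw [hpre, Measure.restrict_apply measurableSet_Iic]
      have : Set.Iic t ∩ Set.Icc (0:ℝ) 1 = Set.Icc 0 t := by
        ext u
        simp only [Set.mem_inter_iff, Set.mem_Iic, Set.mem_Icc]
        constructor
        · rintro ⟨h1, h2, _⟩; exact ⟨h2, h1⟩
        · rintro ⟨h1, h2⟩; exact ⟨h2, h1, h2.trans ht1⟩
      rw [this, Real.volume_Icc, if_neg hx, sub_zero]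
  rw [lintegral_congr hinner]
  have hmeas : Measurable fun x => (if q x = 0 then 0
      else ENNReal.ofReal (f x / (M * q x))) := by
    refine Measurable.ite (hqm (measurableSet_singleton 0)) measurable_const ?_
    exact (hfm.div (measurable_const.mul hqm)).ennreal_ofReal
  rw [lintegral_withDensity_eq_lintegral_mul lam hqm.ennreal_ofReal hmeas]
  refine lintegral_congr fun x => ?_
  by_cases hx : q x = 0
  · have hfx : f x = 0 := le_antisymm (by simpa [hx] using hfq x) (hf0 x)
    simp [hx, hfx]
  · have hqx : 0 < q x := lt_of_le_of_ne (hq0 x) (Ne.symm hx)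
    simp only [Pi.mul_apply, if_neg hx]
    rw [← ENNReal.ofReal_mul (hq0 x)]
    congr 1
    field_simp

/-- The accepted sample may be paired with the rejected proposals of an independent
run of the rejection sampler: the joint law of (rejected proposals of the second run,
accepted sample of the first run) coincides with the joint law of
(rejected proposals, accepted sample) of the first run. -/
theorem rejected_proposals_from_independent_run
    {𝕏 : Type*} [MeasurableSpace 𝕏] (lam : Measure 𝕏) [SigmaFinite lam]
    (q f : 𝕏 → ℝ) (hqm : Measurable q) (hfm : Measurable f)
    (hq0 : ∀ x, 0 ≤ q x) (hq1 : ∫ x, q x ∂lam = 1)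
    (M : ℝ) (hM : 0 < M)
    (hf0 : ∀ x, 0 ≤ f x) (hfq : ∀ x, f x ≤ M * q x)
    (Z : ℝ) (hZ : Z = ∫ x, f x ∂lam) (hZpos : 0 < Z)
    {Ω : Type*} [MeasurableSpace Ω] (P : Measure Ω) [IsProbabilityMeasure P]
    (Y : ℕ → Ω → 𝕏) (U : ℕ → Ω → ℝ)
    (hY : ∀ i, Measurable (Y i)) (hU : ∀ i, Measurable (U i))
    (hindep : iIndepFun (fun i ω => (Y i ω, U i ω)) P)
    (hident : ∀ i, IdentDistrib (fun ω => (Y i ω, U i ω)) (fun ω => (Y 0 ω, U 0 ω)) P P)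
    (hYlaw : ∀ i, P.map (Y i) = lam.withDensity fun x => ENNReal.ofReal (q x))
    (hUlaw : ∀ i, P.map (U i) = volume.restrict (Set.Icc (0:ℝ) 1))
    (hYU : ∀ i, IndepFun (Y i) (U i) P)
    (Y' : ℕ → Ω → 𝕏) (U' : ℕ → Ω → ℝ)
    (hY' : ∀ i, Measurable (Y' i)) (hU' : ∀ i, Measurable (U' i))
    (hindep' : iIndepFun (fun i ω => (Y' i ω, U' i ω)) P)
    (hident' : ∀ i, IdentDistrib (fun ω => (Y' i ω, U' i ω)) (fun ω => (Y 0 ω, U 0 ω)) P P)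
    (hYlaw' : ∀ i, P.map (Y' i) = lam.withDensity fun x => ENNReal.ofReal (q x))
    (hUlaw' : ∀ i, P.map (U' i) = volume.restrict (Set.Icc (0:ℝ) 1))
    (hYU' : ∀ i, IndepFun (Y' i) (U' i) P)
    (hruns : IndepFun (fun ω => fun i : ℕ => (Y i ω, U i ω))
      (fun ω => fun i : ℕ => (Y' i ω, U' i ω)) P)
    (r : ℕ) (B : Set (Fin r → 𝕏)) (hB : MeasurableSet B)
    (A : Set 𝕏) (hA : MeasurableSet A) :
    P {ω | (∀ i < r, ¬ accepts q f M Y' U' i ω) ∧ accepts q f M Y' U' r ω ∧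
        (fun j : Fin r => Y' j ω) ∈ B ∧ firstAccepted q f M Y U ω ∈ A}
      = P {ω | (∀ i < r, ¬ accepts q f M Y U i ω) ∧ accepts q f M Y U r ω ∧
          (fun j : Fin r => Y j ω) ∈ B ∧ firstAccepted q f M Y U ω ∈ A} := by
  classical
  set S : Set (𝕏 × ℝ) := accSet q f M with hSdef
  have hS : MeasurableSet S := measurableSet_accSet hqm hfm M
  have hφ : ∀ i, Measurable fun ω => (Y i ω, U i ω) := fun i => (hY i).prodMk (hU i)
  have hφ' : ∀ i, Measurable fun ω => (Y' i ω, U' i ω) := fun i => (hY' i).prodMk (hU' i)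
  set μ0 : Measure (𝕏 × ℝ) := P.map (fun ω => (Y 0 ω, U 0 ω)) with hμ0
  have hlaw : ∀ i, P.map (fun ω => (Y i ω, U i ω)) = μ0 := fun i => (hident i).map_eq
  have hlaw' : ∀ i, P.map (fun ω => (Y' i ω, U' i ω)) = μ0 := fun i => (hident' i).map_eq
  haveI : IsProbabilityMeasure μ0 := by
    rw [hμ0]; exact Measure.isProbabilityMeasure_map (hφ 0).aemeasurable
  -- the acceptance probability
  set a : ENNReal := μ0 S with ha_def
  have haccp : μ0 S = ∫⁻ x, ENNReal.ofReal (f x / M) ∂lam := by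
    rw [hμ0, hSdef]
    exact accept_prob_eq lam q f hqm hfm hq0 M hM hf0 hfq P (Y 0) (U 0) (hY 0) (hU 0)
      (hYlaw 0) (hUlaw 0) (hYU 0)
  have ha0 : a ≠ 0 := by
    rw [ha_def, haccp]
    intro h0
    have hae := (lintegral_eq_zero_iff ((hfm.div_const M).ennreal_ofReal)).1 h0
    have hfae : f =ᵐ[lam] 0 := by
      filter_upwards [hae] with x hx
      simp only [Pi.zero_apply, ENNReal.ofReal_eq_zero] at hx
      have hle : f x ≤ 0 := by
        by_contra hpos
        push_neg at hpos
        have : 0 < f x / M := div_pos hpos hM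
        linarith
      exact le_antisymm hle (hf0 x)
    have hint0 : ∫ x, f x ∂lam = 0 := by
      rw [integral_congr_ae hfae]; simp
    rw [hZ] at hZpos; linarith
  have hatop : a ≠ ⊤ := measure_ne_top μ0 S
  have ha1 : a ≤ 1 := prob_le_one
  -- the accepted-in-A probability
  set SA : Set (𝕏 × ℝ) := S ∩ (Prod.fst ⁻¹' A) with hSA_def
  have hSA : MeasurableSet SA := hS.inter (measurable_fst hA)
  set b : ENNReal := μ0 SA with hb_def
  -- the all-rejected set over the first n trials
  set Dn : ∀ n : ℕ, Set (Fin n → 𝕏 × ℝ) := fun n => {v | ∀ j, v j ∉ S} with hDn_def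
  have hDn : ∀ n, MeasurableSet (Dn n) := by
    intro n
    have : Dn n = ⋂ j : Fin n, (fun v : Fin n → 𝕏 × ℝ => v j) ⁻¹' Sᶜ := by
      ext v; simp [hDn_def, Set.mem_iInter]
    rw [this]
    exact MeasurableSet.iInter fun j => (measurable_pi_apply j) hS.compl
  have hrejgen : ∀ (Yb : ℕ → Ω → 𝕏) (Ub : ℕ → Ω → ℝ) (n : ℕ),
      {ω | (fun j : Fin n => (Yb j ω, Ub j ω)) ∈ Dn n}
        = {ω | ∀ i < n, ¬ accepts q f M Yb Ub i ω} := by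
    intro Yb Ub n
    ext ω
    simp only [hDn_def, Set.mem_setOf_eq]
    constructor
    · intro h i hi; exact h ⟨i, hi⟩
    · intro h j; exact h j j.2
  -- rejection probabilities
  have c_eq : ∀ n, P {ω | ∀ i < n, ¬ accepts q f M Y U i ω} = (1 - a) ^ n := by
    intro n
    induction n with
    | zero =>
      have : {ω : Ω | ∀ i < 0, ¬ accepts q f M Y U i ω} = Set.univ := by
        ext ω; simp
      rw [this, pow_zero]; exact measure_univ
    | succ n ih =>
      have hsplit : {ω | ∀ i < n + 1, ¬ accepts q f M Y U i ω}
          = {ω | (fun j : Fin n => (Y j ω, U j ω)) ∈ Dn n}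
            ∩ {ω | (Y n ω, U n ω) ∈ Sᶜ} := by
        rw [hrejgen Y U n]
        ext ω
        simp only [Set.mem_setOf_eq, Set.mem_inter_iff, Set.mem_compl_iff]
        constructor
        · intro h
          exact ⟨fun i hi => h i (hi.trans (Nat.lt_succ_self n)), h n (Nat.lt_succ_self n)⟩
        · rintro ⟨h1, h2⟩ i hi
          rcases Nat.lt_succ_iff_lt_or_eq.1 hi with h | rfl
          · exact h1 i h
          · exact h2
      rw [hsplit, key_split hφ hindep hlaw n (hDn n) hS.compl, hrejgen Y U n, ih,
        prob_compl_eq_one_sub hS, pow_succ]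
  -- the first-acceptance events
  set Gset : ℕ → Set Ω := fun n =>
    {ω | (fun j : Fin n => (Y j ω, U j ω)) ∈ Dn n} ∩ {ω | (Y n ω, U n ω) ∈ SA}
    with hGset_def
  have hWm : ∀ n, Measurable fun ω (j : Fin n) => (Y j ω, U j ω) :=
    fun n => measurable_pi_lambda _ fun j => hφ j
  have hGmeas : ∀ n, MeasurableSet (Gset n) :=
    fun n => ((hWm n) (hDn n)).inter ((hφ n) hSA)
  have hG : ∀ n, P (Gset n) = (1 - a) ^ n * b := by
    intro n
    rw [hGset_def]
    rw [key_split hφ hindep hlaw n (hDn n) hSA, hrejgen Y U n, c_eq n, hb_def]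
  have hGmem : ∀ n ω, ω ∈ Gset n ↔
      (∀ i < n, ¬ accepts q f M Y U i ω) ∧ accepts q f M Y U n ω ∧ Y n ω ∈ A := by
    intro n ω
    constructor
    · rintro ⟨h1, h2⟩
      exact ⟨fun i hi => h1 ⟨i, hi⟩, h2.1, h2.2⟩
    · rintro ⟨h1, h2, h3⟩
      exact ⟨fun j => h1 j j.2, h2, h3⟩
  have hdisjG : Pairwise (Function.onFun Disjoint Gset) := by
    intro m n hmn
    rcases lt_or_gt_of_ne hmn with h | h
    · refine Set.disjoint_left.2 ?_
      rintro ω hm hn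
      rcases hGmem m ω |>.1 hm with ⟨_, hacc, _⟩
      rcases hGmem n ω |>.1 hn with ⟨hrej, _, _⟩
      exact hrej m h hacc
    · refine Set.disjoint_left.2 ?_
      rintro ω hm hn
      rcases hGmem n ω |>.1 hn with ⟨_, hacc, _⟩
      rcases hGmem m ω |>.1 hm with ⟨hrej, _, _⟩
      exact hrej n h hacc
  -- the never-accepted event is null
  have hN : P {ω | ∀ i, ¬ accepts q f M Y U i ω} = 0 := by
    refine le_antisymm ?_ zero_le
    have h1alt : (1 : ENNReal) - a < 1 :=
      ENNReal.sub_lt_self ENNReal.one_ne_top one_ne_zero ha0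
    refine ge_of_tendsto' (ENNReal.tendsto_pow_atTop_nhds_zero_of_lt_one h1alt) fun n => ?_
    calc P {ω | ∀ i, ¬ accepts q f M Y U i ω}
        ≤ P {ω | ∀ i < n, ¬ accepts q f M Y U i ω} :=
          measure_mono fun ω h i _ => h i
      _ = (1 - a) ^ n := c_eq n
  -- the law of the accepted sample
  have hdecomp : {ω | firstAccepted q f M Y U ω ∈ A}
      = (⋃ n, Gset n) ∪
        ({ω | ∀ i, ¬ accepts q f M Y U i ω} ∩ {ω | Y 0 ω ∈ A}) := by
    ext ω
    simp only [Set.mem_setOf_eq, Set.mem_union, Set.mem_iUnion, Set.mem_inter_iff, hGmem]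
    unfold firstAccepted
    by_cases hex : ∃ i, accepts q f M Y U i ω
    · rw [dif_pos hex]
      constructor
      · intro hA'
        exact Or.inl ⟨Nat.find hex, fun i hi => Nat.find_min hex hi, Nat.find_spec hex, hA'⟩
      · rintro (⟨n, h1, h2, h3⟩ | ⟨h1, _⟩)
        · have hfind : Nat.find hex = n := (Nat.find_eq_iff hex).2 ⟨h2, h1⟩
          rw [hfind]; exact h3
        · exact absurd hex (by simpa using h1)
    · rw [dif_neg hex]
      push_neg at hex
      constructor
      · intro hA'
        exact Or.inr ⟨hex, hA'⟩
      · rintro (⟨n, _, h2, _⟩ | ⟨_, h3⟩)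
        · exact absurd h2 (hex n)
        · exact h3
  have hPfA : P {ω | firstAccepted q f M Y U ω ∈ A} = a⁻¹ * b := by
    have hnull : P ({ω | ∀ i, ¬ accepts q f M Y U i ω} ∩ {ω | Y 0 ω ∈ A}) = 0 :=
      measure_mono_null Set.inter_subset_left hN
    have hUeq : P ((⋃ n, Gset n) ∪
        ({ω | ∀ i, ¬ accepts q f M Y U i ω} ∩ {ω | Y 0 ω ∈ A})) = P (⋃ n, Gset n) := by
      refine le_antisymm ?_ (measure_mono Set.subset_union_left)
      have hle := measure_union_le (μ := P) (⋃ n, Gset n)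
        ({ω | ∀ i, ¬ accepts q f M Y U i ω} ∩ {ω | Y 0 ω ∈ A})
      rwa [hnull, add_zero] at hle
    rw [hdecomp, hUeq, measure_iUnion hdisjG hGmeas]
    calc ∑' n, P (Gset n) = ∑' n, (1 - a) ^ n * b := tsum_congr hG
      _ = (∑' n : ℕ, (1 - a) ^ n) * b := ENNReal.tsum_mul_right
      _ = (1 - (1 - a))⁻¹ * b := by rw [ENNReal.tsum_geometric]
      _ = a⁻¹ * b := by rw [ENNReal.sub_sub_cancel ENNReal.one_ne_top ha1]
  -- the sequence-space sets
  set DA : Set (ℕ → 𝕏 × ℝ) :=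
    (⋃ n, {v | (∀ i < n, v i ∉ S) ∧ v n ∈ S ∧ (v n).1 ∈ A}) ∪
      ({v | ∀ i, v i ∉ S} ∩ {v | (v 0).1 ∈ A}) with hDA_def
  have hDA : MeasurableSet DA := by
    rw [hDA_def]
    refine MeasurableSet.union (MeasurableSet.iUnion fun n => ?_) ?_
    · have : {v : ℕ → 𝕏 × ℝ | (∀ i < n, v i ∉ S) ∧ v n ∈ S ∧ (v n).1 ∈ A}
          = (⋂ i, ⋂ _ : i < n, (fun v : ℕ → 𝕏 × ℝ => v i) ⁻¹' Sᶜ)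
            ∩ ((fun v : ℕ → 𝕏 × ℝ => v n) ⁻¹' S
              ∩ (fun v : ℕ → 𝕏 × ℝ => (v n).1) ⁻¹' A) := by
        ext v
        simp only [Set.mem_setOf_eq, Set.mem_inter_iff, Set.mem_iInter, Set.mem_preimage,
          Set.mem_compl_iff]
      rw [this]
      exact ((MeasurableSet.iInter fun i => MeasurableSet.iInter fun _ =>
        (measurable_pi_apply i) hS.compl).inter
        (((measurable_pi_apply n) hS).inter
          ((measurable_fst.comp (measurable_pi_apply n)) hA)))
    · have : ({v : ℕ → 𝕏 × ℝ | ∀ i, v i ∉ S} ∩ {v | (v 0).1 ∈ A})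
          = (⋂ i, (fun v : ℕ → 𝕏 × ℝ => v i) ⁻¹' Sᶜ)
            ∩ (fun v : ℕ → 𝕏 × ℝ => (v 0).1) ⁻¹' A := by
        ext v
        simp only [Set.mem_setOf_eq, Set.mem_inter_iff, Set.mem_iInter, Set.mem_preimage,
          Set.mem_compl_iff]
      rw [this]
      exact (MeasurableSet.iInter fun i => (measurable_pi_apply i) hS.compl).inter
        ((measurable_fst.comp (measurable_pi_apply 0)) hA)
  have hVDA : (fun ω => fun i : ℕ => (Y i ω, U i ω)) ⁻¹' DA
      = {ω | firstAccepted q f M Y U ω ∈ A} := by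
    rw [hdecomp]
    ext ω
    simp only [hDA_def, Set.mem_preimage, Set.mem_union, Set.mem_iUnion, Set.mem_inter_iff,
      Set.mem_setOf_eq, hGmem, hDn_def]
    constructor
    · rintro (⟨n, h1, h2, h3⟩ | ⟨h1, h2⟩)
      · exact Or.inl ⟨n, h1, h2, h3⟩
      · exact Or.inr ⟨h1, h2⟩
    · rintro (⟨n, h1, h2, h3⟩ | ⟨h1, h2⟩)
      · exact Or.inl ⟨n, h1, h2, h3⟩
      · exact Or.inr ⟨h1, h2⟩
  set C : Set (ℕ → 𝕏 × ℝ) :=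
    {v | (∀ i < r, v i ∉ S) ∧ v r ∈ S ∧ (fun j : Fin r => (v j).1) ∈ B} with hC_def
  have hC : MeasurableSet C := by
    rw [hC_def]
    have : {v : ℕ → 𝕏 × ℝ | (∀ i < r, v i ∉ S) ∧ v r ∈ S ∧ (fun j : Fin r => (v j).1) ∈ B}
        = (⋂ i, ⋂ _ : i < r, (fun v : ℕ → 𝕏 × ℝ => v i) ⁻¹' Sᶜ)
          ∩ ((fun v : ℕ → 𝕏 × ℝ => v r) ⁻¹' S
            ∩ (fun v : ℕ → 𝕏 × ℝ => fun j : Fin r => (v j).1) ⁻¹' B) := by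
      ext v
      simp only [Set.mem_setOf_eq, Set.mem_inter_iff, Set.mem_iInter, Set.mem_preimage,
        Set.mem_compl_iff]
    rw [this]
    refine ((MeasurableSet.iInter fun i => MeasurableSet.iInter fun _ =>
      (measurable_pi_apply i) hS.compl).inter
      (((measurable_pi_apply r) hS).inter ?_))
    have hproj : Measurable fun v : ℕ → 𝕏 × ℝ => fun j : Fin r => (v (j : ℕ)).1 :=
      measurable_pi_lambda _ fun j => measurable_fst.comp (measurable_pi_apply ((j : ℕ)))
    exact hproj hB
  -- the rejected-prefix-in-B set over Fin r
  set DB : Set (Fin r → 𝕏 × ℝ) :=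
    {v | (∀ j, v j ∉ S) ∧ (fun j : Fin r => (v j).1) ∈ B} with hDB_def
  have hDB : MeasurableSet DB := by
    rw [hDB_def]
    have : {v : Fin r → 𝕏 × ℝ | (∀ j, v j ∉ S) ∧ (fun j : Fin r => (v j).1) ∈ B}
        = (⋂ j : Fin r, (fun v : Fin r → 𝕏 × ℝ => v j) ⁻¹' Sᶜ)
          ∩ (fun v : Fin r → 𝕏 × ℝ => fun j : Fin r => (v j).1) ⁻¹' B := by
      ext v
      simp only [Set.mem_setOf_eq, Set.mem_inter_iff, Set.mem_iInter, Set.mem_preimage,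
        Set.mem_compl_iff]
    rw [this]
    have hproj : Measurable fun v : Fin r → 𝕏 × ℝ => fun j : Fin r => (v j).1 :=
      measurable_pi_lambda _ fun j => measurable_fst.comp (measurable_pi_apply j)
    exact (MeasurableSet.iInter fun j => (measurable_pi_apply j) hS.compl).inter (hproj hB)
  -- rewrite the left-hand side
  have hLHS : {ω | (∀ i < r, ¬ accepts q f M Y' U' i ω) ∧ accepts q f M Y' U' r ω ∧
      (fun j : Fin r => Y' j ω) ∈ B ∧ firstAccepted q f M Y U ω ∈ A}
      = ((fun ω => fun i : ℕ => (Y' i ω, U' i ω)) ⁻¹' C)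
        ∩ ((fun ω => fun i : ℕ => (Y i ω, U i ω)) ⁻¹' DA) := by
    rw [hVDA, hC_def]
    ext ω
    simp only [Set.mem_setOf_eq, Set.mem_inter_iff, Set.mem_preimage]
    exact ⟨fun ⟨h1, h2, h3, h4⟩ => ⟨⟨h1, h2, h3⟩, h4⟩,
      fun ⟨⟨h1, h2, h3⟩, h4⟩ => ⟨h1, h2, h3, h4⟩⟩
  have hVC : (fun ω => fun i : ℕ => (Y' i ω, U' i ω)) ⁻¹' C
      = {ω | (fun j : Fin r => (Y' j ω, U' j ω)) ∈ DB}
        ∩ {ω | (Y' r ω, U' r ω) ∈ S} := by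
    rw [hC_def, hDB_def]
    ext ω
    simp only [Set.mem_preimage, Set.mem_setOf_eq, Set.mem_inter_iff]
    constructor
    · rintro ⟨h1, h2, h3⟩
      exact ⟨⟨fun j => h1 j j.2, h3⟩, h2⟩
    · rintro ⟨⟨h1, h3⟩, h2⟩
      exact ⟨fun i hi => h1 ⟨i, hi⟩, h2, h3⟩
  -- rewrite the right-hand side
  have hRHS : {ω | (∀ i < r, ¬ accepts q f M Y U i ω) ∧ accepts q f M Y U r ω ∧
      (fun j : Fin r => Y j ω) ∈ B ∧ firstAccepted q f M Y U ω ∈ A}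
      = {ω | (fun j : Fin r => (Y j ω, U j ω)) ∈ DB}
        ∩ {ω | (Y r ω, U r ω) ∈ SA} := by
    ext ω
    simp only [Set.mem_setOf_eq, Set.mem_inter_iff, hDB_def, hSA_def, Set.mem_inter_iff,
      Set.mem_preimage]
    constructor
    · rintro ⟨h1, h2, h3, h4⟩
      have hex : ∃ i, accepts q f M Y U i ω := ⟨r, h2⟩
      have hfind : Nat.find hex = r := (Nat.find_eq_iff hex).2 ⟨h2, h1⟩
      unfold firstAccepted at h4
      rw [dif_pos hex, hfind] at h4
      exact ⟨⟨fun j => h1 j j.2, h3⟩, h2, h4⟩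
    · rintro ⟨⟨h1, h3⟩, h2, h4⟩
      have h1' : ∀ i < r, ¬ accepts q f M Y U i ω := fun i hi => h1 ⟨i, hi⟩
      refine ⟨h1', h2, h3, ?_⟩
      have hex : ∃ i, accepts q f M Y U i ω := ⟨r, h2⟩
      have hfind : Nat.find hex = r := (Nat.find_eq_iff hex).2 ⟨h2, h1'⟩
      unfold firstAccepted
      rw [dif_pos hex, hfind]
      exact h4
  -- put everything together
  rw [hLHS, hRHS, Set.inter_comm,
    hruns.measure_inter_preimage_eq_mul _ _ hDA hC, hVDA, hPfA, hVC,
    key_split hφ' hindep' hlaw' r hDB hS,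
    cross_eq hφ hφ' hindep hindep' hlaw hlaw' r hDB,
    key_split hφ hindep hlaw r hDB hSA]
  calc (a⁻¹ * b) * (P {ω | (fun j : Fin r => (Y j ω, U j ω)) ∈ DB} * a)
      = P {ω | (fun j : Fin r => (Y j ω, U j ω)) ∈ DB} * b * (a * a⁻¹) := by ring
    _ = P {ω | (fun j : Fin r => (Y j ω, U j ω)) ∈ DB} * μ0 SA := by
        rw [ENNReal.mul_inv_cancel ha0 hatop, mul_one, hb_def]
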